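/- Let a, α, β be real numbers with 0 ≤ a < 1. Then for every θ ∈ ℝ, |β + e^{iθ}·α| / |1 + e^{iθ}·a| ≤ max( |β − α|/(1 − a), |β + α|/(1 + a) ), where the absolute values on the left are moduli of complex numbers. -/

import Mathlib

set_option maxHeartbeats 1000000 in


/-- Cosine-rule inequality used in the improved triangle inequality. -/
theorem improved_triangle_pointwise (a α β : ℝ) (ha : 0 ≤ a) (ha' : a < 1) (θ : ℝ) :
    ‖(β : ℂ) + Complex.exp (Complex.I * (θ : ℂ)) * (α : ℂ)‖ /
        ‖1 + Complex.exp (Complex.I * (θ : ℂ)) * (a : ℂ)‖ ≤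
      max (|β - α| / (1 - a)) (|β + α| / (1 + a)) := by
  set c := Real.cos θ with hc
  set s := Real.sin θ with hs
  have hcs : s ^ 2 + c ^ 2 = 1 := Real.sin_sq_add_cos_sq θ
  have hc1 : c ≤ 1 := Real.cos_le_one θ
  have hc2 : -1 ≤ c := Real.neg_one_le_cos θ
  have hexp : Complex.exp (Complex.I * (θ : ℂ)) = Complex.ofReal c + Complex.ofReal s * Complex.I := by
    rw [mul_comm, Complex.exp_mul_I, hc, hs, Complex.ofReal_cos, Complex.ofReal_sin]
  have h1 : (‖(β : ℂ) + Complex.exp (Complex.I * (θ : ℂ)) * (α : ℂ)‖) ^ 2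
      = β ^ 2 + α ^ 2 + 2 * α * β * c := by
    rw [hexp, Complex.sq_norm]
    simp [Complex.normSq_apply]
    nlinarith [hcs]
  have h2 : (‖1 + Complex.exp (Complex.I * (θ : ℂ)) * (a : ℂ)‖) ^ 2
      = 1 + a ^ 2 + 2 * a * c := by
    rw [hexp, Complex.sq_norm]
    simp [Complex.normSq_apply]
    nlinarith [hcs]
  set M := max (|β - α| / (1 - a)) (|β + α| / (1 + a)) with hM
  have hM0 : 0 ≤ M := le_trans (div_nonneg (abs_nonneg _) (by linarith)) (le_max_left _ _)
  have hMl : |β - α| ≤ M * (1 - a) := by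
    rw [← div_le_iff₀ (by linarith)]; exact le_max_left _ _
  have hMr : |β + α| ≤ M * (1 + a) := by
    rw [← div_le_iff₀ (by linarith)]; exact le_max_right _ _
  have hD : (0:ℝ) < 1 + a ^ 2 + 2 * a * c := by nlinarith
  have hDabs : 0 < ‖1 + Complex.exp (Complex.I * (θ : ℂ)) * (a : ℂ)‖ := by
    nlinarith [norm_nonneg (1 + Complex.exp (Complex.I * (θ : ℂ)) * (a : ℂ)), h2, hD]
  rw [div_le_iff₀ hDabs]
  have hNabs : 0 ≤ ‖(β : ℂ) + Complex.exp (Complex.I * (θ : ℂ)) * (α : ℂ)‖ :=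
    norm_nonneg _
  have hsq1 : (β - α) ^ 2 ≤ (M * (1 - a)) ^ 2 := by
    nlinarith [mul_le_mul hMl hMl (abs_nonneg _) (by nlinarith : (0:ℝ) ≤ M * (1 - a)),
      sq_abs (β - α)]
  have hsq2 : (β + α) ^ 2 ≤ (M * (1 + a)) ^ 2 := by
    nlinarith [mul_le_mul hMr hMr (abs_nonneg _) (by nlinarith : (0:ℝ) ≤ M * (1 + a)),
      sq_abs (β + α)]
  have p1 : 0 ≤ (1 + c) * (M ^ 2 * (1 + a) ^ 2 - (β + α) ^ 2) :=
    mul_nonneg (by linarith) (by nlinarith [hsq2])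
  have p2 : 0 ≤ (1 - c) * (M ^ 2 * (1 - a) ^ 2 - (β - α) ^ 2) :=
    mul_nonneg (by linarith) (by nlinarith [hsq1])
  have key : β ^ 2 + α ^ 2 + 2 * α * β * c ≤ M ^ 2 * (1 + a ^ 2 + 2 * a * c) := by
    nlinarith [p1, p2]
  have hsq : ‖(β : ℂ) + Complex.exp (Complex.I * (θ : ℂ)) * (α : ℂ)‖ ^ 2
      ≤ (M * ‖1 + Complex.exp (Complex.I * (θ : ℂ)) * (a : ℂ)‖) ^ 2 := by
    rw [h1, mul_pow, h2]; linarith [key]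
  exact (pow_le_pow_iff_left₀ hNabs (mul_nonneg hM0 hDabs.le) two_ne_zero).mp hsq
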